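/- arXiv:2402.09357 — 3 statements merged into one kernel-verified Lean document; each statement's English description precedes it below -/
import Mathlib

section
/- Increasing marginal cost: Let Φ : (0,∞)² → ℝ be strictly increasing in each coordinate, differentiable with positive partial derivatives, and concave, and let r(x,y) = (∂Φ/∂x)(x,y)/(∂Φ/∂y)(x,y) denote the market exchange rate. If (x,y) and (x′,y′) are pool states with Φ(x,y) = Φ(x′,y′) and 0 < x′ ≤ x, then r(x,y) ≤ r(x′,y′). In other words, the price of X goes up if the pool has less supply of X. -/
open Filter Set

noncomputable def marketRate (Φ : ℝ → ℝ → ℝ) (x y : ℝ) : ℝ :=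
  deriv (fun t => Φ t y) x / deriv (fun t => Φ x t) y

/-- If `g` has derivative `d` at `c` and `g c ≤ g t` eventually to the right of `c`,
then `0 ≤ d`. -/
lemma aux_deriv_nonneg_right {g : ℝ → ℝ} {d c : ℝ} (h : HasDerivAt g d c)
    (hmin : ∀ᶠ t in nhdsWithin c (Set.Ioi c), g c ≤ g t) : 0 ≤ d := by
  have h1 : Tendsto (slope g c) (nhdsWithin c {c}ᶜ) (nhds d) :=
    hasDerivAt_iff_tendsto_slope.mp h
  have h2 : Tendsto (slope g c) (nhdsWithin c (Set.Ioi c)) (nhds d) :=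
    h1.mono_left (nhdsWithin_mono c (fun t ht => ne_of_gt ht))
  refine ge_of_tendsto h2 ?_
  filter_upwards [hmin, self_mem_nhdsWithin] with t ht ht'
  have hden : 0 < t - c := sub_pos.mpr ht'
  have : 0 ≤ (g t - g c) / (t - c) := div_nonneg (by linarith) hden.le
  simpa [slope, vsub_eq_sub, div_eq_inv_mul] using this

/-- If `g` has derivative `d` at `c` and `g c ≤ g t` eventually to the left of `c`,
then `d ≤ 0`. -/
lemma aux_deriv_nonpos_left {g : ℝ → ℝ} {d c : ℝ} (h : HasDerivAt g d c)
    (hmin : ∀ᶠ t in nhdsWithin c (Set.Iio c), g c ≤ g t) : d ≤ 0 := by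
  have h1 : Tendsto (slope g c) (nhdsWithin c {c}ᶜ) (nhds d) :=
    hasDerivAt_iff_tendsto_slope.mp h
  have h2 : Tendsto (slope g c) (nhdsWithin c (Set.Iio c)) (nhds d) :=
    h1.mono_left (nhdsWithin_mono c (fun t ht => ne_of_lt ht))
  refine le_of_tendsto h2 ?_
  filter_upwards [hmin, self_mem_nhdsWithin] with t ht ht'
  have hden : t - c < 0 := sub_neg.mpr ht'
  have : (g t - g c) / (t - c) ≤ 0 := div_nonpos_of_nonneg_of_nonpos (by linarith) hden.le
  simpa [slope, vsub_eq_sub, div_eq_inv_mul] using this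

theorem increasing_marginal_cost
    (Φ : ℝ → ℝ → ℝ)
    (hmonoX : ∀ ⦃x x' y : ℝ⦄, 0 < x → x < x' → 0 < y → Φ x y < Φ x' y)
    (hmonoY : ∀ ⦃x y y' : ℝ⦄, 0 < x → 0 < y → y < y' → Φ x y < Φ x y')
    (hdiff : ∀ ⦃x y : ℝ⦄, 0 < x → 0 < y →
      DifferentiableAt ℝ (fun p : ℝ × ℝ => Φ p.1 p.2) (x, y))
    (hpartX : ∀ ⦃x y : ℝ⦄, 0 < x → 0 < y → 0 < deriv (fun t => Φ t y) x)
    (hpartY : ∀ ⦃x y : ℝ⦄, 0 < x → 0 < y → 0 < deriv (fun t => Φ x t) y)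
    (hconc : ConcaveOn ℝ (Set.Ioi (0:ℝ) ×ˢ Set.Ioi (0:ℝ))
      (fun p : ℝ × ℝ => Φ p.1 p.2))
    (x y x' y' : ℝ)
    (hx : 0 < x) (hy : 0 < y) (hx' : 0 < x') (hy' : 0 < y')
    (hlevel : Φ x y = Φ x' y')
    (hle : x' ≤ x) :
    marketRate Φ x y ≤ marketRate Φ x' y' := by
  rcases eq_or_lt_of_le hle with heq | hlt
  · -- x' = x forces y' = y
    have hyy : y = y' := by
      by_contra hne
      rcases lt_or_gt_of_ne hne with h | h
      · exact absurd (hlevel ▸ hmonoY hx hy h) (by rw [heq]; exact lt_irrefl _)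
      · exact absurd (hlevel ▸ hmonoY hx' hy' h) (by rw [heq]; exact lt_irrefl _)
    rw [heq, hyy]
  · -- x' < x, hence y < y'
    set F : ℝ × ℝ → ℝ := fun p => Φ p.1 p.2 with hF
    have hyy : y < y' := by
      by_contra hcon
      push_neg at hcon
      have h1 : Φ x' y < Φ x y := hmonoX hx' hlt hy
      rcases eq_or_lt_of_le hcon with h | h
      · rw [hlevel, h] at h1; exact lt_irrefl _ h1
      · have h2 : Φ x' y' < Φ x' y := hmonoY hx' hy' h
        rw [hlevel] at h1; linarith
    have hp : ((x, y) : ℝ × ℝ) ∈ (Set.Ioi (0:ℝ) ×ˢ Set.Ioi (0:ℝ)) := ⟨hx, hy⟩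
    have hq : ((x', y') : ℝ × ℝ) ∈ (Set.Ioi (0:ℝ) ×ˢ Set.Ioi (0:ℝ)) := ⟨hx', hy'⟩
    have hFeq : F (x, y) = F (x', y') := hlevel
    have hDp := (hdiff hx hy).hasFDerivAt
    have hDq := (hdiff hx' hy').hasFDerivAt
    set Dp := fderiv ℝ F (x, y) with hDpdef
    set Dq := fderiv ℝ F (x', y') with hDqdef
    set v : ℝ × ℝ := ((x', y') : ℝ × ℝ) - (x, y) with hv
    -- the segment function
    set g : ℝ → ℝ := fun t => F ((x, y) + t • v) with hg
    -- g t ≥ g 0 = g 1 for t ∈ [0,1]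
    have hseg : ∀ t ∈ Set.Icc (0:ℝ) 1, F (x, y) ≤ g t := by
      intro t ht
      have hcomb := hconc.2 hp hq (by linarith [ht.1, ht.2] : (0:ℝ) ≤ 1 - t) ht.1
        (by ring)
      have heqpt : (1 - t) • ((x, y) : ℝ × ℝ) + t • ((x', y') : ℝ × ℝ)
          = (x, y) + t • v := by
        simp only [hv]; module
      rw [heqpt] at hcomb
      calc F (x, y) = (1 - t) * F (x, y) + t * F (x', y') := by rw [hFeq]; ring
        _ ≤ g t := hcomb
    -- derivative of g at 0 and 1
    have hcurve : ∀ t : ℝ, HasDerivAt (fun s : ℝ => ((x, y) : ℝ × ℝ) + s • v) v t := by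
      intro t
      simpa using ((hasDerivAt_id t).smul_const v).const_add ((x, y) : ℝ × ℝ)
    have hg0 : HasDerivAt g (Dp v) 0 := by
      have hDp0 : HasFDerivAt F Dp ((x, y) + (0:ℝ) • v) := by simpa using hDp
      have := hDp0.comp_hasDerivAt 0 (hcurve 0)
      exact this
    have hg1 : HasDerivAt g (Dq v) 1 := by
      have h1 : ((x, y) : ℝ × ℝ) + (1:ℝ) • v = (x', y') := by simp [hv]
      have hDq1 : HasFDerivAt F Dq ((x, y) + (1:ℝ) • v) := by rw [h1]; exact hDq
      have := hDq1.comp_hasDerivAt 1 (hcurve 1)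
      exact this
    -- sign of the directional derivatives
    have hd0 : 0 ≤ Dp v := by
      refine aux_deriv_nonneg_right hg0 ?_
      have hmem : Set.Ioc (0:ℝ) 1 ∈ nhdsWithin (0:ℝ) (Set.Ioi 0) :=
        Ioc_mem_nhdsGT_of_mem (by norm_num : (0:ℝ) ∈ Set.Ico (0:ℝ) 1)
      filter_upwards [hmem] with t ht
      have : F (x, y) ≤ g t := hseg t ⟨ht.1.le, ht.2⟩
      simpa [hg, hv] using this
    have hd1 : Dq v ≤ 0 := by
      refine aux_deriv_nonpos_left hg1 ?_
      have hmem : Set.Ico (0:ℝ) 1 ∈ nhdsWithin (1:ℝ) (Set.Iio 1) :=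
        Ico_mem_nhdsLT_of_mem (by norm_num : (1:ℝ) ∈ Set.Ioc (0:ℝ) 1)
      have hgeq1 : g 1 = F (x, y) := by
        simp [hg, hv, hFeq]
      rw [hgeq1]
      filter_upwards [hmem] with t ht
      exact hseg t ⟨ht.1, ht.2.le⟩
    -- partial derivatives as Dp/Dq applied to basis vectors
    have hpartial : ∀ (a b : ℝ) (D : ℝ × ℝ →L[ℝ] ℝ), HasFDerivAt F D (a, b) →
        deriv (fun t => Φ t b) a = D (1, 0) ∧ deriv (fun t => Φ a t) b = D (0, 1) := by
      intro a b D hD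
      constructor
      · have hc : HasDerivAt (fun t : ℝ => ((t, b) : ℝ × ℝ)) ((1:ℝ), (0:ℝ)) a := by
          exact (hasDerivAt_id a).prodMk (hasDerivAt_const a b)
        have := hD.comp_hasDerivAt a hc
        exact this.deriv
      · have hc : HasDerivAt (fun t : ℝ => ((a, t) : ℝ × ℝ)) ((0:ℝ), (1:ℝ)) b := by
          exact (hasDerivAt_const b a).prodMk (hasDerivAt_id b)
        have := hD.comp_hasDerivAt b hc
        exact this.deriv
    obtain ⟨hfx, hfy⟩ := hpartial x y Dp hDp
    obtain ⟨hgx, hgy⟩ := hpartial x' y' Dq hDq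
    -- expand Dp v, Dq v in terms of partials
    have hvdecomp : v = (x' - x) • ((1:ℝ), (0:ℝ)) + (y' - y) • ((0:ℝ), (1:ℝ)) := by
      simp [hv, Prod.ext_iff]
    have hDpv : Dp v = (x' - x) * Dp (1, 0) + (y' - y) * Dp (0, 1) := by
      rw [hvdecomp, map_add, map_smul, map_smul, smul_eq_mul, smul_eq_mul]
    have hDqv : Dq v = (x' - x) * Dq (1, 0) + (y' - y) * Dq (0, 1) := by
      rw [hvdecomp, map_add, map_smul, map_smul, smul_eq_mul, smul_eq_mul]
    -- now the arithmetic
    have hfxpos : 0 < deriv (fun t => Φ t y) x := hpartX hx hy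
    have hfypos : 0 < deriv (fun t => Φ x t) y := hpartY hx hy
    have hgxpos : 0 < deriv (fun t => Φ t y') x' := hpartX hx' hy'
    have hgypos : 0 < deriv (fun t => Φ x' t) y' := hpartY hx' hy'
    rw [hDpv, ← hfx, ← hfy] at hd0
    rw [hDqv, ← hgx, ← hgy] at hd1
    unfold marketRate
    rw [div_le_div_iff₀ hfypos hgypos]
    nlinarith [mul_pos hfxpos hgypos, mul_pos hfypos hgxpos, sub_pos.mpr hlt,
      sub_pos.mpr hyy, mul_pos (sub_pos.mpr hlt) (sub_pos.mpr hyy)]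
end

section
/- Rule R2 for the natural partial ordering: Fix a target net trade δx* ∈ ℝ and a limit rate r > 0, and let ⪰ be the natural partial ordering on outcomes. Suppose (δx₀,δy₀) and (δx₁,δy₁) satisfy (δx₀−δx*)·(δx₁−δx*) ≥ 0 (same side of the goal), |δx₀−δx*| < |δx₁−δx*| (δx₀ strictly closer to the goal), and δy₁−δy₀ > r·(δx₀−δx₁). Then it is NOT the case that (δx₀,δy₀) ⪰ (δx₁,δy₁). -/
/-- The natural partial ordering on outcomes `(δx, δy)` for a user with target
net trade `δxs` in `X` and limit rate `r`: the least relation closed under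
(1) coordinatewise dominance, (2) comparison by `r·δx + δy` when both net
trades lie (weakly) between `0` and the target, (3) progress toward the target
at a marginal rate at least as good as `r`, and (4) transitivity. -/
inductive Pref (δxs r : ℝ) : ℝ × ℝ → ℝ × ℝ → Prop where
  | dom {a b : ℝ × ℝ} (h1 : b.1 ≤ a.1) (h2 : b.2 ≤ a.2) : Pref δxs r a b
  | mid {a b : ℝ × ℝ} (h1 : a.1 * (a.1 - δxs) ≤ 0) (h2 : b.1 * (b.1 - δxs) ≤ 0)
      (h3 : r * b.1 + b.2 ≤ r * a.1 + a.2) : Pref δxs r a b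
  | prog {a b : ℝ × ℝ} (h1 : 0 ≤ (a.1 - δxs) * (b.1 - δxs))
      (h2 : |a.1 - δxs| ≤ |b.1 - δxs|)
      (h3 : b.2 - a.2 ≤ r * (a.1 - b.1)) : Pref δxs r a b
  | trans {a c b : ℝ × ℝ} (h1 : Pref δxs r a c) (h2 : Pref δxs r c b) :
      Pref δxs r a b

/-!
STATEMENT 5 (Rule R2).  Fix a target net trade δx* and a limit rate r > 0.
If (δx₀,δy₀) and (δx₁,δy₁) are on the same side of the goal, δx₀ is strictly
closer to the goal, and δy₁ − δy₀ > r·(δx₀ − δx₁), then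
¬ ((δx₀,δy₀) ⪰ (δx₁,δy₁)).
-/

theorem rule_R2 (δxs r : ℝ) (hr : 0 < r) (δx₀ δy₀ δx₁ δy₁ : ℝ)
    (hside : 0 ≤ (δx₀ - δxs) * (δx₁ - δxs))
    (hclose : |δx₀ - δxs| < |δx₁ - δxs|)
    (hpay : r * (δx₀ - δx₁) < δy₁ - δy₀) :
    ¬ Pref δxs r (δx₀, δy₀) (δx₁, δy₁) := by
  intro h
  have key : ∀ a b : ℝ × ℝ, Pref δxs r a b → r * b.1 + b.2 ≤ r * a.1 + a.2 := by
    intro a b h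
    induction h with
    | dom h1 h2 => nlinarith
    | mid h1 h2 h3 => exact h3
    | prog h1 h2 h3 => nlinarith
    | trans h1 h2 ih1 ih2 => linarith
  have := key _ _ h
  simp only at this
  linarith
end

section
/- The total ordering by linear utility refines the natural partial ordering: Fix a target net trade δx* ∈ ℝ and a limit rate r > 0, let ⪰ be the natural partial ordering on outcomes, and define the utility u(δx,δy) = r·δx + δy. If (δx₀,δy₀) ⪰ (δx₁,δy₁), then u(δx₀,δy₀) ≥ u(δx₁,δy₁). -/
/-!
STATEMENT 7 (The total ordering by linear utility refines the natural partial
ordering).  Fix a target net trade δx* and a limit rate r > 0, and define the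
utility u(δx,δy) = r·δx + δy.  If (δx₀,δy₀) ⪰ (δx₁,δy₁) then
u(δx₀,δy₀) ≥ u(δx₁,δy₁).
-/

theorem total_refines_partial (δxs r : ℝ) (hr : 0 < r)
    (δx₀ δy₀ δx₁ δy₁ : ℝ)
    (hpref : Pref δxs r (δx₀, δy₀) (δx₁, δy₁)) :
    r * δx₁ + δy₁ ≤ r * δx₀ + δy₀ := by
  suffices h : ∀ a b : ℝ × ℝ, Pref δxs r a b → r * b.1 + b.2 ≤ r * a.1 + a.2 from
    h _ _ hpref
  intro a b h
  induction h with
  | dom h1 h2 => nlinarith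
  | mid h1 h2 h3 => exact h3
  | prog h1 h2 h3 => nlinarith
  | trans h1 h2 ih1 ih2 => linarith
end
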